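/- Let (φ₀,φ₁,σ) be a deterrence equilibrium of the stage game Γ(μ). If Firm 0 controls the market (the consumer never buys from Firm 1), then α⁻_μ ≥ 1/2, where α⁻_μ = μα⁻/(μα⁻+(1−μ)(1−α⁻)). Symmetrically, if Firm 1 controls the market, then α⁺_μ ≤ 1/2, where α⁺_μ = μα⁺/(μα⁺+(1−μ)(1−α⁺)). -/

import Mathlib

/-!
A firm that never sells earns zero profit. If private beliefs below `1 - μ` (posterior below
`1/2`) had positive probability, Firm 1 could post a small price `t > 0` at which those
consumers buy from it whatever Firm 0 charges, earning at least a positive constant times `t`.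
Hence, when Firm 0 controls the market, almost every private belief is at least `1 - μ`, i.e.
`α⁻_μ ≥ 1/2`; the case of Firm 1 is symmetric.

For these payoffs to be genuine integrals one needs measurability in the prices: off the
countably many atoms of the posterior distribution the consumer's best reply is a cutoff rule,
so a sale probability, as a function of one price, agrees with a monotone function outside a
countable set.
-/

open MeasureTheory Set Filter Topology
open scoped ENNReal NNReal

noncomputable section

/-- The consumer's possible actions: buy product 0, buy product 1, or exit. -/
inductive CAction : Type
  | buy0 : CAction
  | buy1 : CAction
  | exit : CAction

instance : MeasurableSpace CAction := ⊤

/-- A signal structure `(F₀, F₁, S)`: two mutually absolutely continuous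
probability measures on a measurable space `S`. -/
structure SignalStructure (S : Type) [MeasurableSpace S] : Type where
  F0 : Measure S
  F1 : Measure S
  prob0 : IsProbabilityMeasure F0
  prob1 : IsProbabilityMeasure F1
  ac01 : F0 ≪ F1
  ac10 : F1 ≪ F0

namespace SignalStructure

variable {S : Type} [MeasurableSpace S]

/-- The reference measure `(F₀ + F₁)/2`. -/
def ref (𝒮 : SignalStructure S) : Measure S := (2 : ℝ≥0∞)⁻¹ • (𝒮.F0 + 𝒮.F1)

/-- Radon–Nikodym density of `F₀` with respect to `(F₀+F₁)/2`. -/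
def f0 (𝒮 : SignalStructure S) : S → ℝ≥0∞ := 𝒮.F0.rnDeriv 𝒮.ref

/-- Radon–Nikodym density of `F₁` with respect to `(F₀+F₁)/2`. -/
def f1 (𝒮 : SignalStructure S) : S → ℝ≥0∞ := 𝒮.F1.rnDeriv 𝒮.ref

/-- The private belief `p(s) = f₀(s)/(f₀(s)+f₁(s))`. -/
def p (𝒮 : SignalStructure S) (s : S) : ℝ :=
  (𝒮.f0 s).toReal / ((𝒮.f0 s).toReal + (𝒮.f1 s).toReal)

/-- `G₀(x) = F₀ {s | p(s) < x}`, the CDF of the private belief in state 0. -/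
def G0 (𝒮 : SignalStructure S) (x : ℝ) : ℝ := (𝒮.F0 {s | 𝒮.p s < x}).toReal

/-- `G₁(x) = F₁ {s | p(s) < x}`, the CDF of the private belief in state 1. -/
def G1 (𝒮 : SignalStructure S) (x : ℝ) : ℝ := (𝒮.F1 {s | 𝒮.p s < x}).toReal

/-- `α⁻ = inf {x | G(x) > 0}`. -/
def alphaLo (𝒮 : SignalStructure S) : ℝ := sInf {x | 0 < 𝒮.G0 x}

/-- `α⁺ = sup {x | G(x) < 1}`. -/
def alphaHi (𝒮 : SignalStructure S) : ℝ := sSup {x | 𝒮.G0 x < 1}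

/-- Signals are bounded if `α⁻ > 0` and `α⁺ < 1`. -/
def Bounded (𝒮 : SignalStructure S) : Prop := 0 < 𝒮.alphaLo ∧ 𝒮.alphaHi < 1

/-- Signals are unbounded if `α⁻ = 0` and `α⁺ = 1`. -/
def Unbounded (𝒮 : SignalStructure S) : Prop := 𝒮.alphaLo = 0 ∧ 𝒮.alphaHi = 1

/-- Assumption 1: `G₀, G₁` are differentiable on `(α⁻, α⁺)` with continuous
nonnegative derivatives `g₀, g₁ : [α⁻, α⁺] → ℝ₊`. -/
structure Assumption1 (𝒮 : SignalStructure S) (g0 g1 : ℝ → ℝ) : Prop where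
  cont0 : ContinuousOn g0 (Icc 𝒮.alphaLo 𝒮.alphaHi)
  cont1 : ContinuousOn g1 (Icc 𝒮.alphaLo 𝒮.alphaHi)
  nonneg0 : ∀ x ∈ Icc 𝒮.alphaLo 𝒮.alphaHi, 0 ≤ g0 x
  nonneg1 : ∀ x ∈ Icc 𝒮.alphaLo 𝒮.alphaHi, 0 ≤ g1 x
  hasDeriv0 : ∀ x ∈ Ioo 𝒮.alphaLo 𝒮.alphaHi, HasDerivAt 𝒮.G0 (g0 x) x
  hasDeriv1 : ∀ x ∈ Ioo 𝒮.alphaLo 𝒮.alphaHi, HasDerivAt 𝒮.G1 (g1 x) x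

/-- The signal structure exhibits vanishing likelihood: `g₁(α⁻) = g₀(α⁺) = 0`. -/
def VanishingLikelihood (𝒮 : SignalStructure S) (g0 g1 : ℝ → ℝ) : Prop :=
  g1 𝒮.alphaLo = 0 ∧ g0 𝒮.alphaHi = 0

end SignalStructure

/-- Bayesian posterior on state 0 from a prior `μ` and a private belief `q`:
`p_μ = μ q / (μ q + (1-μ)(1-q))`. -/
def posterior (μ q : ℝ) : ℝ := μ * q / (μ * q + (1 - μ) * (1 - q))

/-- The consumer's expected utility, given posterior `q` on state 0 and prices
`τ₀, τ₁`, from each action. -/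
def cUtil (q τ0 τ1 : ℝ) : CAction → ℝ
  | CAction.buy0 => q - τ0
  | CAction.buy1 => (1 - q) - τ1
  | CAction.exit => 0

/-- A consumer pure strategy: maps the posted price pair and the signal to an action. -/
abbrev CStrategy (S : Type) : Type := ℝ → ℝ → S → CAction

/-- A mixed price strategy of a firm: a Borel probability measure on `[0,1]`. -/
def IsPriceStrategy (φ : Measure ℝ) : Prop :=
  IsProbabilityMeasure φ ∧ φ (Icc (0:ℝ) 1) = 1

namespace SignalStructure

variable {S : Type} [MeasurableSpace S]

/-- The signal distribution under prior `μ`: the mixture `μ F₀ + (1-μ) F₁`. -/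
def Fmix (𝒮 : SignalStructure S) (μ : ℝ) : Measure S :=
  ENNReal.ofReal μ • 𝒮.F0 + ENNReal.ofReal (1 - μ) • 𝒮.F1

/-- The probability (under prior `μ`) that the consumer takes action `a` when the
pure prices `τ₀, τ₁` are posted. -/
def actProb (𝒮 : SignalStructure S) (μ : ℝ) (σ : CStrategy S) (τ0 τ1 : ℝ) (a : CAction) : ℝ :=
  (𝒮.Fmix μ {s | σ τ0 τ1 s = a}).toReal

/-- Firm 0's expected payoff in `Γ(μ)` under mixed strategies `φ₀, φ₁` and consumer
strategy `σ`. -/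
def Pi0 (𝒮 : SignalStructure S) (μ : ℝ) (φ0 φ1 : Measure ℝ) (σ : CStrategy S) : ℝ :=
  ∫ τ, 𝒮.actProb μ σ τ.1 τ.2 CAction.buy0 * τ.1 ∂(φ0.prod φ1)

/-- Firm 1's expected payoff in `Γ(μ)`. -/
def Pi1 (𝒮 : SignalStructure S) (μ : ℝ) (φ0 φ1 : Measure ℝ) (σ : CStrategy S) : ℝ :=
  ∫ τ, 𝒮.actProb μ σ τ.1 τ.2 CAction.buy1 * τ.2 ∂(φ0.prod φ1)

/-- The probability that the consumer takes action `a` under mixed price strategies. -/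
def actProbMix (𝒮 : SignalStructure S) (μ : ℝ) (φ0 φ1 : Measure ℝ) (σ : CStrategy S)
    (a : CAction) : ℝ :=
  ∫ τ, 𝒮.actProb μ σ τ.1 τ.2 a ∂(φ0.prod φ1)

/-- A subgame perfect equilibrium of the stage game `Γ(μ)`: the consumer strategy is a
best reply to every price pair, and each firm's mixed price strategy maximizes its
expected payoff given the opponent's strategy and the consumer's strategy. -/
structure IsSPE (𝒮 : SignalStructure S) (μ : ℝ) (φ0 φ1 : Measure ℝ) (σ : CStrategy S) :
    Prop where
  strat0 : IsPriceStrategy φ0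
  strat1 : IsPriceStrategy φ1
  meas : ∀ τ0 τ1, Measurable (σ τ0 τ1)
  consumerBR : ∀ τ0 ∈ Icc (0:ℝ) 1, ∀ τ1 ∈ Icc (0:ℝ) 1,
    ∀ᵐ s ∂(𝒮.Fmix μ), ∀ a : CAction,
      cUtil (posterior μ (𝒮.p s)) τ0 τ1 a ≤ cUtil (posterior μ (𝒮.p s)) τ0 τ1 (σ τ0 τ1 s)
  firm0opt : ∀ ψ : Measure ℝ, IsPriceStrategy ψ → 𝒮.Pi0 μ ψ φ1 σ ≤ 𝒮.Pi0 μ φ0 φ1 σ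
  firm1opt : ∀ ψ : Measure ℝ, IsPriceStrategy ψ → 𝒮.Pi1 μ φ0 ψ σ ≤ 𝒮.Pi1 μ φ0 φ1 σ

/-- A deterrence equilibrium: an SPE in which some firm sells with probability zero. -/
def IsDeterrence (𝒮 : SignalStructure S) (μ : ℝ) (φ0 φ1 : Measure ℝ) (σ : CStrategy S) :
    Prop :=
  𝒮.IsSPE μ φ0 φ1 σ ∧
    (𝒮.actProbMix μ φ0 φ1 σ CAction.buy0 = 0 ∨ 𝒮.actProbMix μ φ0 φ1 σ CAction.buy1 = 0)

/-- The market is full at `(μ, σ, τ₀, τ₁)` if the consumer exits with probability zero. -/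
def MarketFull (𝒮 : SignalStructure S) (μ : ℝ) (σ : CStrategy S) (τ0 τ1 : ℝ) : Prop :=
  𝒮.Fmix μ {s | σ τ0 τ1 s = CAction.exit} = 0

open scoped Classical in
/-- The consumer's best-reply threshold `v_μ(τ₀,τ₁)` on the private belief. -/
def v (𝒮 : SignalStructure S) (μ : ℝ) (σ : CStrategy S) (τ0 τ1 : ℝ) : ℝ :=
  if 𝒮.MarketFull μ σ τ0 τ1 then
    (1 - μ) * (1 + τ0 - τ1) / (2 * μ - (2 * μ - 1) * (1 + τ0 - τ1))
  else (1 - μ) * τ0 / (μ - (2 * μ - 1) * τ0)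

end SignalStructure

lemma MeasureTheory.Measure.measure_toReal_rnDeriv_eq_zero {α : Type*} [MeasurableSpace α]
    {ν ρ : Measure α} [SigmaFinite ν] [SigmaFinite ρ] (hνρ : ν ≪ ρ) :
    ν {x | (ν.rnDeriv ρ x).toReal = 0} = 0 := by
  rw [measure_eq_zero_iff_ae_notMem]
  filter_upwards [Measure.rnDeriv_pos hνρ, hνρ.ae_le (Measure.rnDeriv_ne_top ν ρ)]
    with x hpos hfin
  exact (ENNReal.toReal_pos hpos.ne' hfin).ne'

lemma aestronglyMeasurable_of_eqOn_monotone {f m : ℝ → ℝ} {C s : Set ℝ} (hm : Monotone m)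
    (hC : C.Countable) (hfm : EqOn f m (s \ C)) {φ : Measure ℝ} (hφ : ∀ᵐ x ∂φ, x ∈ s) :
    AEStronglyMeasurable f φ := by
  classical
  have hr : Measurable (C.piecewise f m) := hm.measurable.measurable_of_countable_ne <|
    hC.mono fun x hx => by_contra fun hxC => hx (piecewise_eq_of_notMem _ _ _ hxC).symm
  refine ⟨C.piecewise f m, hr.stronglyMeasurable, ?_⟩
  filter_upwards [hφ] with x hx
  by_cases hxC : x ∈ C
  · exact (piecewise_eq_of_mem _ _ _ hxC).symm
  · rw [piecewise_eq_of_notMem _ _ _ hxC]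
    exact hfm ⟨hx, hxC⟩

lemma MeasureTheory.AEStronglyMeasurable.of_mul_of_eq_on_zero {α : Type*} [MeasurableSpace α]
    {ν : Measure α} {F w H : α → ℝ} (hw : Measurable w)
    (hFw : AEStronglyMeasurable (fun x => F x * w x) ν) (hH : AEStronglyMeasurable H ν)
    (hFH : ∀ x, w x = 0 → F x = H x) : AEStronglyMeasurable F ν := by
  have hs : MeasurableSet {x | w x = 0} := hw (measurableSet_singleton 0)
  refine ((hH.indicator hs).add ((hFw.mul hw.inv.aestronglyMeasurable).indicator hs.compl)).congr
    (ae_of_all _ fun x => ?_)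
  by_cases hx : w x = 0
  · simp [hx, hFH x hx]
  · simp [hx]

lemma le_integral_of_ae_le {α : Type*} [MeasurableSpace α] {φ : Measure α}
    [IsProbabilityMeasure φ] {f : α → ℝ} {c C : ℝ} (hf : AEStronglyMeasurable f φ)
    (hC : ∀ᵐ x ∂φ, ‖f x‖ ≤ C) (hc : ∀ᵐ x ∂φ, c ≤ f x) : c ≤ ∫ x, f x ∂φ := by
  simpa using integral_mono_ae (integrable_const c) (Integrable.of_bound hf C hC) hc

lemma one_sub_mem_Icc_of_mem_Ioo {μ : ℝ} (hμ : μ ∈ Ioo (0:ℝ) 1) : 1 - μ ∈ Icc (0:ℝ) 1 :=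
  ⟨by linarith [hμ.2], by linarith [hμ.1]⟩

section Posterior

variable {μ : ℝ}

lemma posterior_zero (μ : ℝ) : posterior μ 0 = 0 := by simp [posterior]

lemma posterior_one (hμ : μ ≠ 0) : posterior μ 1 = 1 := by simp [posterior, hμ]

lemma posterior_one_sub (hμ : μ ∈ Ioo (0:ℝ) 1) : posterior μ (1 - μ) = 1 / 2 := by
  have : μ * (1 - μ) ≠ 0 := mul_ne_zero hμ.1.ne' (sub_ne_zero.2 hμ.2.ne')
  rw [posterior, sub_sub_cancel, mul_comm (1 - μ), ← two_mul, div_mul_cancel_right₀ this]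
  norm_num

lemma posterior_strictMonoOn (hμ : μ ∈ Ioo (0:ℝ) 1) : StrictMonoOn (posterior μ) (Icc 0 1) := by
  obtain ⟨hμ0, hμ1⟩ := hμ
  have hden : ∀ a ∈ Icc (0:ℝ) 1, 0 < μ * a + (1 - μ) * (1 - a) := fun a ⟨ha0, ha1⟩ => by
    rcases le_or_gt a (1 / 2) with h | h <;> nlinarith
  intro a ha b hb hab
  rw [posterior, posterior, div_lt_div_iff₀ (hden a ha) (hden b hb)]
  nlinarith [mul_pos hμ0 (sub_pos.2 hμ1)]

lemma posterior_mem_Icc (hμ : μ ∈ Ioo (0:ℝ) 1) {a : ℝ} (ha : a ∈ Icc (0:ℝ) 1) :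
    posterior μ a ∈ Icc (0:ℝ) 1 := by
  have hmono := (posterior_strictMonoOn hμ).monotoneOn
  refine ⟨?_, ?_⟩
  · simpa [posterior_zero] using hmono ⟨le_rfl, zero_le_one⟩ ha ha.1
  · simpa [posterior_one hμ.1.ne'] using hmono ha ⟨zero_le_one, le_rfl⟩ ha.2

lemma measurable_posterior (μ : ℝ) : Measurable (posterior μ) := by
  unfold posterior; fun_prop

end Posterior

lemma IsPriceStrategy.ae_mem_Icc {φ : Measure ℝ} (hφ : IsPriceStrategy φ) :
    ∀ᵐ x ∂φ, x ∈ Icc (0:ℝ) 1 := by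
  have := hφ.1
  exact ae_iff.2 ((prob_compl_eq_zero_iff measurableSet_Icc).2 hφ.2)

lemma isPriceStrategy_dirac {t : ℝ} (ht : t ∈ Icc (0:ℝ) 1) :
    IsPriceStrategy (Measure.dirac t) :=
  ⟨inferInstance, by simp [ht]⟩

def IsBestReply (q τ0 τ1 : ℝ) (b : CAction) : Prop :=
  ∀ a, cUtil q τ0 τ1 a ≤ cUtil q τ0 τ1 b

namespace IsBestReply

variable {q τ0 τ1 : ℝ} {b : CAction}

lemma eq_buy1_iff (h : IsBestReply q τ0 τ1 b) (hq : q ≠ min ((1 + τ0 - τ1) / 2) (1 - τ1)) :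
    b = .buy1 ↔ q < min ((1 + τ0 - τ1) / 2) (1 - τ1) := by
  have h0 := h .buy0; have h1 := h .buy1; have he := h .exit
  cases b <;> simp only [cUtil, reduceCtorEq, false_iff, true_iff, not_lt] at h0 h1 he ⊢
  · exact min_le_of_left_le (by linarith)
  · exact lt_of_le_of_ne (le_min (by linarith) (by linarith)) hq
  · exact min_le_of_right_le (by linarith)

lemma eq_buy0_iff (h : IsBestReply q τ0 τ1 b) (hq : q ≠ max τ0 ((1 + τ0 - τ1) / 2)) :
    b = .buy0 ↔ max τ0 ((1 + τ0 - τ1) / 2) < q := by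
  have h0 := h .buy0; have h1 := h .buy1; have he := h .exit
  cases b <;> simp only [cUtil, reduceCtorEq, false_iff, true_iff, not_lt] at h0 h1 he ⊢
  · exact lt_of_le_of_ne (max_le (by linarith) (by linarith)) hq.symm
  · exact le_max_of_le_right (by linarith)
  · exact le_max_of_le_left (by linarith)

end IsBestReply

namespace SignalStructure

variable {S : Type} [MeasurableSpace S] (𝒮 : SignalStructure S) {μ : ℝ}

lemma p_mem_Icc (s : S) : 𝒮.p s ∈ Icc (0:ℝ) 1 := by
  have ha : (0:ℝ) ≤ (𝒮.f0 s).toReal := ENNReal.toReal_nonneg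
  have hb : (0:ℝ) ≤ (𝒮.f1 s).toReal := ENNReal.toReal_nonneg
  exact ⟨div_nonneg ha (add_nonneg ha hb),
    div_le_one_of_le₀ (le_add_of_nonneg_right hb) (add_nonneg ha hb)⟩

lemma measurable_p : Measurable 𝒮.p := by
  have h0 : Measurable 𝒮.f0 := Measure.measurable_rnDeriv _ _
  have h1 : Measurable 𝒮.f1 := Measure.measurable_rnDeriv _ _
  unfold p; fun_prop

lemma F0_ac_ref : 𝒮.F0 ≪ 𝒮.ref :=
  (Measure.AbsolutelyContinuous.rfl.add_right _).trans
    (Measure.absolutelyContinuous_smul (by simp))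

lemma F1_ac_ref : 𝒮.F1 ≪ 𝒮.ref := by
  refine (Measure.AbsolutelyContinuous.rfl.add_right 𝒮.F0).trans ?_
  rw [add_comm]
  exact Measure.absolutelyContinuous_smul (by simp)

instance : IsFiniteMeasure 𝒮.ref := by
  have := 𝒮.prob0; have := 𝒮.prob1
  exact Measure.smul_finite _ (by simp)

lemma F0_p_eq_zero : 𝒮.F0 {s | 𝒮.p s = 0} = 0 := by
  have := 𝒮.prob0
  refine measure_mono_null (fun s (hs : 𝒮.p s = 0) => ?_)
    (Measure.measure_toReal_rnDeriv_eq_zero 𝒮.F0_ac_ref)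
  have hb : (0:ℝ) ≤ (𝒮.f1 s).toReal := ENNReal.toReal_nonneg
  rcases div_eq_zero_iff.1 hs with h | h
  · exact h
  · change (𝒮.f0 s).toReal = 0
    linarith [(ENNReal.toReal_nonneg : (0:ℝ) ≤ (𝒮.f0 s).toReal)]

lemma F1_p_eq_one : 𝒮.F1 {s | 𝒮.p s = 1} = 0 := by
  have := 𝒮.prob1
  refine measure_mono_null (fun s (hs : 𝒮.p s = 1) => ?_)
    (Measure.measure_toReal_rnDeriv_eq_zero 𝒮.F1_ac_ref)
  have hden : (𝒮.f0 s).toReal + (𝒮.f1 s).toReal ≠ 0 := fun h => by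
    simp [p, h] at hs
  change (𝒮.f1 s).toReal = 0
  rw [p, div_eq_one_iff_eq hden] at hs
  linarith

abbrev belief (μ : ℝ) (s : S) : ℝ := posterior μ (𝒮.p s)

lemma belief_mem_Icc (hμ : μ ∈ Ioo (0:ℝ) 1) (s : S) : 𝒮.belief μ s ∈ Icc (0:ℝ) 1 :=
  posterior_mem_Icc hμ (𝒮.p_mem_Icc s)

lemma measurable_belief (μ : ℝ) : Measurable (𝒮.belief μ) :=
  (measurable_posterior μ).comp 𝒮.measurable_p

instance (μ : ℝ) : IsFiniteMeasure (𝒮.Fmix μ) := by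
  have := 𝒮.prob0; have := 𝒮.prob1
  have := Measure.smul_finite 𝒮.F0 (ENNReal.ofReal_ne_top (r := μ))
  have := Measure.smul_finite 𝒮.F1 (ENNReal.ofReal_ne_top (r := 1 - μ))
  unfold Fmix; infer_instance

lemma isProbabilityMeasure_Fmix (hμ : μ ∈ Ioo (0:ℝ) 1) : IsProbabilityMeasure (𝒮.Fmix μ) := by
  have := 𝒮.prob0; have := 𝒮.prob1
  constructor
  simp only [Fmix, Measure.add_apply, Measure.smul_apply, measure_univ, smul_eq_mul, mul_one]
  rw [← ENNReal.ofReal_add hμ.1.le (by linarith [hμ.2])]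
  norm_num

lemma Fmix_eq_zero_iff (hμ : μ ∈ Ioo (0:ℝ) 1) {A : Set S} : 𝒮.Fmix μ A = 0 ↔ 𝒮.F0 A = 0 := by
  simp only [Fmix, Measure.add_apply, Measure.smul_apply, smul_eq_mul, add_eq_zero,
    mul_eq_zero, ENNReal.ofReal_eq_zero, not_le.2 hμ.1, sub_nonpos, not_le.2 hμ.2, false_or]
  exact ⟨And.left, fun h => ⟨h, 𝒮.ac10 h⟩⟩

lemma Fmix_belief_eq_zero (hμ : μ ∈ Ioo (0:ℝ) 1) : 𝒮.Fmix μ {s | 𝒮.belief μ s = 0} = 0 := by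
  refine (𝒮.Fmix_eq_zero_iff hμ).2 (measure_mono_null (fun s (hs : _ = 0) => ?_) 𝒮.F0_p_eq_zero)
  rw [← posterior_zero μ] at hs
  exact (posterior_strictMonoOn hμ).injOn (𝒮.p_mem_Icc s) ⟨le_rfl, zero_le_one⟩ hs

lemma Fmix_belief_eq_one (hμ : μ ∈ Ioo (0:ℝ) 1) : 𝒮.Fmix μ {s | 𝒮.belief μ s = 1} = 0 := by
  refine (𝒮.Fmix_eq_zero_iff hμ).2 (𝒮.ac01 (measure_mono_null (fun s (hs : _ = 1) => ?_)
    𝒮.F1_p_eq_one))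
  rw [← posterior_one hμ.1.ne'] at hs
  exact (posterior_strictMonoOn hμ).injOn (𝒮.p_mem_Icc s) ⟨zero_le_one, le_rfl⟩ hs

lemma countable_belief_atoms (μ : ℝ) :
    {x : ℝ | 𝒮.Fmix μ {s | 𝒮.belief μ s = x} ≠ 0}.Countable := by
  simpa only [pos_iff_ne_zero] using
    Measure.countable_meas_level_set_pos (μ := 𝒮.Fmix μ) (𝒮.measurable_belief μ)

lemma G0_eq_zero_of_nonpos {x : ℝ} (hx : x ≤ 0) : 𝒮.G0 x = 0 := by
  have hempty : {s | 𝒮.p s < x} = ∅ :=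
    eq_empty_of_forall_notMem fun s hs => (hs.trans_le hx).not_ge (𝒮.p_mem_Icc s).1
  rw [G0, hempty, measure_empty, ENNReal.toReal_zero]

lemma G0_eq_one_of_one_lt {x : ℝ} (hx : 1 < x) : 𝒮.G0 x = 1 := by
  have := 𝒮.prob0
  have huniv : {s | 𝒮.p s < x} = univ :=
    eq_univ_of_forall fun s => (𝒮.p_mem_Icc s).2.trans_lt hx
  rw [G0, huniv, measure_univ, ENNReal.toReal_one]

lemma alphaLo_le_one : 𝒮.alphaLo ≤ 1 := by
  refine le_of_forall_gt_imp_ge_of_dense fun y hy => csInf_le ⟨0, fun x hx => ?_⟩ ?_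
  · exact le_of_not_gt fun hneg => (hx : 0 < 𝒮.G0 x).ne' (𝒮.G0_eq_zero_of_nonpos hneg.le)
  · simp [G0_eq_one_of_one_lt _ hy]

lemma alphaHi_nonneg : 0 ≤ 𝒮.alphaHi := by
  refine le_csSup ⟨1, fun x hx => ?_⟩ ?_
  · exact le_of_not_gt fun hgt => (hx : 𝒮.G0 x < 1).ne (𝒮.G0_eq_one_of_one_lt hgt)
  · simp [G0_eq_zero_of_nonpos _ le_rfl]

variable {𝒮} {σ : CStrategy S}

lemma actProb_nonneg (τ0 τ1 : ℝ) (a : CAction) : 0 ≤ 𝒮.actProb μ σ τ0 τ1 a :=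
  ENNReal.toReal_nonneg

lemma actProb_le_one (hμ : μ ∈ Ioo (0:ℝ) 1) (τ0 τ1 : ℝ) (a : CAction) :
    𝒮.actProb μ σ τ0 τ1 a ≤ 1 := by
  have := 𝒮.isProbabilityMeasure_Fmix hμ
  exact ENNReal.toReal_le_of_le_ofReal zero_le_one (by simpa using prob_le_one)

lemma Pi0_dirac (φ1 : Measure ℝ) [SFinite φ1] (t : ℝ) :
    𝒮.Pi0 μ (Measure.dirac t) φ1 σ = ∫ τ1, 𝒮.actProb μ σ t τ1 .buy0 * t ∂φ1 := by
  rw [Pi0, Measure.dirac_prod, (measurableEmbedding_prodMk_left t).integral_map]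

lemma Pi1_dirac (φ0 : Measure ℝ) [SFinite φ0] (t : ℝ) :
    𝒮.Pi1 μ φ0 (Measure.dirac t) σ = ∫ τ0, 𝒮.actProb μ σ τ0 t .buy1 * t ∂φ0 := by
  rw [Pi1, Measure.prod_dirac, (measurableEmbedding_prod_mk_right t).integral_map]

variable (𝒮) in
def IsConsumerBestReply (μ : ℝ) (σ : CStrategy S) : Prop :=
  ∀ τ0 ∈ Icc (0:ℝ) 1, ∀ τ1 ∈ Icc (0:ℝ) 1,
    ∀ᵐ s ∂(𝒮.Fmix μ), IsBestReply (𝒮.belief μ s) τ0 τ1 (σ τ0 τ1 s)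

lemma IsSPE.isConsumerBestReply {φ0 φ1 : Measure ℝ} (h : 𝒮.IsSPE μ φ0 φ1 σ) :
    𝒮.IsConsumerBestReply μ σ :=
  h.consumerBR

namespace IsConsumerBestReply

variable {τ0 τ1 : ℝ} (hσ : 𝒮.IsConsumerBestReply μ σ)
include hσ

section Prices

variable (hτ0 : τ0 ∈ Icc (0:ℝ) 1) (hτ1 : τ1 ∈ Icc (0:ℝ) 1)
include hτ0 hτ1

lemma toReal_Fmix_le_actProb_buy1 :
    (𝒮.Fmix μ {s | 𝒮.belief μ s < min ((1 + τ0 - τ1) / 2) (1 - τ1)}).toReal ≤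
      𝒮.actProb μ σ τ0 τ1 .buy1 := by
  refine ENNReal.toReal_mono (measure_ne_top _ _) (measure_mono_ae ?_)
  filter_upwards [hσ τ0 hτ0 τ1 hτ1] with s hbr hs
  exact (hbr.eq_buy1_iff hs.ne).2 hs

lemma toReal_Fmix_le_actProb_buy0 :
    (𝒮.Fmix μ {s | max τ0 ((1 + τ0 - τ1) / 2) < 𝒮.belief μ s}).toReal ≤
      𝒮.actProb μ σ τ0 τ1 .buy0 := by
  refine ENNReal.toReal_mono (measure_ne_top _ _) (measure_mono_ae ?_)
  filter_upwards [hσ τ0 hτ0 τ1 hτ1] with s hbr hs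
  exact (hbr.eq_buy0_iff hs.ne').2 hs

lemma actProb_buy1_eq
    (htie : 𝒮.Fmix μ {s | 𝒮.belief μ s = min ((1 + τ0 - τ1) / 2) (1 - τ1)} = 0) :
    𝒮.actProb μ σ τ0 τ1 .buy1 =
      (𝒮.Fmix μ {s | 𝒮.belief μ s < min ((1 + τ0 - τ1) / 2) (1 - τ1)}).toReal := by
  refine congrArg ENNReal.toReal (measure_congr ?_)
  filter_upwards [hσ τ0 hτ0 τ1 hτ1, measure_eq_zero_iff_ae_notMem.1 htie] with s hbr hs
  exact propext (hbr.eq_buy1_iff hs)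

lemma actProb_buy0_eq
    (htie : 𝒮.Fmix μ {s | 𝒮.belief μ s = max τ0 ((1 + τ0 - τ1) / 2)} = 0) :
    𝒮.actProb μ σ τ0 τ1 .buy0 =
      (𝒮.Fmix μ {s | max τ0 ((1 + τ0 - τ1) / 2) < 𝒮.belief μ s}).toReal := by
  refine congrArg ENNReal.toReal (measure_congr ?_)
  filter_upwards [hσ τ0 hτ0 τ1 hτ1, measure_eq_zero_iff_ae_notMem.1 htie] with s hbr hs
  exact propext (hbr.eq_buy0_iff hs)

end Prices

variable {φ : Measure ℝ} (hφ : ∀ᵐ x ∂φ, x ∈ Icc (0:ℝ) 1)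
include hφ

/-- Off the countably many `τ0` at which `(1 + τ0 - τ1) / 2` is an atom of the belief,
`actProb_buy1_eq` identifies the sale probability with a monotone function of `τ0`. -/
lemma aestronglyMeasurable_actProb_buy1 (hτ1 : τ1 ∈ Icc (0:ℝ) 1)
    (hatom : 𝒮.Fmix μ {s | 𝒮.belief μ s = 1 - τ1} = 0) :
    AEStronglyMeasurable (fun τ0 => 𝒮.actProb μ σ τ0 τ1 .buy1) φ := by
  refine aestronglyMeasurable_of_eqOn_monotone
    (m := fun τ0 => (𝒮.Fmix μ {s | 𝒮.belief μ s < min ((1 + τ0 - τ1) / 2) (1 - τ1)}).toReal)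
    (C := (fun τ0 => (1 + τ0 - τ1) / 2) ⁻¹' {x | 𝒮.Fmix μ {s | 𝒮.belief μ s = x} ≠ 0})
    (fun a b hab => ?_) ?_ (fun τ0 hτ0 => ?_) hφ
  · refine ENNReal.toReal_mono (measure_ne_top _ _)
      (measure_mono (ofPred_subset_ofPred.2 fun s hs => ?_))
    exact lt_of_lt_of_le hs (min_le_min_right _ (by linarith))
  · exact (𝒮.countable_belief_atoms μ).preimage fun a b hab => by simp_all
  · refine hσ.actProb_buy1_eq hτ0.1 hτ1 ?_
    rcases min_choice ((1 + τ0 - τ1) / 2) (1 - τ1) with h | h <;> rw [h]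
    · exact not_ne_iff.1 hτ0.2
    · exact hatom

lemma aestronglyMeasurable_actProb_buy0 (hτ0 : τ0 ∈ Icc (0:ℝ) 1)
    (hatom : 𝒮.Fmix μ {s | 𝒮.belief μ s = τ0} = 0) :
    AEStronglyMeasurable (fun τ1 => 𝒮.actProb μ σ τ0 τ1 .buy0) φ := by
  refine aestronglyMeasurable_of_eqOn_monotone
    (m := fun τ1 => (𝒮.Fmix μ {s | max τ0 ((1 + τ0 - τ1) / 2) < 𝒮.belief μ s}).toReal)
    (C := (fun τ1 => (1 + τ0 - τ1) / 2) ⁻¹' {x | 𝒮.Fmix μ {s | 𝒮.belief μ s = x} ≠ 0})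
    (fun a b hab => ?_) ?_ (fun τ1 hτ1 => ?_) hφ
  · refine ENNReal.toReal_mono (measure_ne_top _ _)
      (measure_mono (ofPred_subset_ofPred.2 fun s hs => ?_))
    exact lt_of_le_of_lt (max_le_max_left _ (by linarith)) hs
  · exact (𝒮.countable_belief_atoms μ).preimage fun a b hab => by simp_all
  · refine hσ.actProb_buy0_eq hτ0 hτ1.1 ?_
    rcases max_choice τ0 ((1 + τ0 - τ1) / 2) with h | h <;> rw [h]
    · exact hatom
    · exact not_ne_iff.1 hτ1.2

end IsConsumerBestReply

end SignalStructure

namespace SignalStructure.IsSPE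

variable {S : Type} [MeasurableSpace S] {𝒮 : SignalStructure S} {μ : ℝ} {σ : CStrategy S}
  {φ0 φ1 : Measure ℝ} (hμ : μ ∈ Ioo (0:ℝ) 1) (h : 𝒮.IsSPE μ φ0 φ1 σ)
include hμ h

lemma Pi1_pos {ε : ℝ} (hε : 0 < ε) (hmass : 𝒮.Fmix μ {s | 2 * 𝒮.belief μ s + ε < 1} ≠ 0) :
    0 < 𝒮.Pi1 μ φ0 φ1 σ := by
  have := h.strat0.1
  -- a small price `t` such that the belief `1 - t` carries no mass, so that Firm 1's sale
  -- probability is measurable in `τ0`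
  obtain ⟨t, hatom, ht⟩ := (((𝒮.countable_belief_atoms μ).preimage
    (sub_right_injective (b := (1:ℝ)))).dense_compl ℝ).exists_between (lt_min hε one_pos)
  have htIcc : t ∈ Icc (0:ℝ) 1 := ⟨ht.1.le, (ht.2.trans_le (min_le_right _ _)).le⟩
  have hsale : ∀ τ0 ∈ Icc (0:ℝ) 1,
      (𝒮.Fmix μ {s | 2 * 𝒮.belief μ s + ε < 1}).toReal ≤ 𝒮.actProb μ σ τ0 t .buy1 := by
    refine fun τ0 hτ0 => le_trans (ENNReal.toReal_mono (measure_ne_top _ _) (measure_mono ?_))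
      (h.isConsumerBestReply.toReal_Fmix_le_actProb_buy1 hτ0 htIcc)
    refine ofPred_subset_ofPred.2 fun s hs => lt_min ?_ ?_
    all_goals linarith [(𝒮.belief_mem_Icc hμ s).1, hτ0.1, ht.2.trans_le (min_le_left _ _)]
  calc 0 < (𝒮.Fmix μ {s | 2 * 𝒮.belief μ s + ε < 1}).toReal * t :=
        mul_pos (ENNReal.toReal_pos hmass (measure_ne_top _ _)) ht.1
    _ ≤ 𝒮.Pi1 μ φ0 (Measure.dirac t) σ := by
      rw [Pi1_dirac]
      refine le_integral_of_ae_le (C := 1)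
        ((h.isConsumerBestReply.aestronglyMeasurable_actProb_buy1 h.strat0.ae_mem_Icc htIcc
          (not_ne_iff.1 hatom)).mul_const t) (ae_of_all _ fun τ0 => ?_) ?_
      · rw [norm_mul, Real.norm_of_nonneg (actProb_nonneg _ _ _), Real.norm_of_nonneg htIcc.1]
        exact mul_le_one₀ (actProb_le_one hμ _ _ _) htIcc.1 htIcc.2
      · filter_upwards [h.strat0.ae_mem_Icc] with τ0 hτ0
        exact mul_le_mul_of_nonneg_right (hsale τ0 hτ0) htIcc.1
    _ ≤ 𝒮.Pi1 μ φ0 φ1 σ := h.firm1opt _ (isPriceStrategy_dirac htIcc)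

lemma Pi1_eq_zero (h1 : 𝒮.actProbMix μ φ0 φ1 σ .buy1 = 0) : 𝒮.Pi1 μ φ0 φ1 σ = 0 := by
  have := h.strat0.1; have := h.strat1.1
  by_cases hG : Integrable (fun τ : ℝ × ℝ => 𝒮.actProb μ σ τ.1 τ.2 .buy1 * τ.2) (φ0.prod φ1)
  swap
  · exact integral_undef hG
  -- dividing the integrand by `τ1` recovers the sale probability except on the slice `τ1 = 0`
  have hF : AEStronglyMeasurable (fun τ : ℝ × ℝ => 𝒮.actProb μ σ τ.1 τ.2 .buy1) (φ0.prod φ1) :=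
    .of_mul_of_eq_on_zero measurable_snd hG.aestronglyMeasurable
      (h.isConsumerBestReply.aestronglyMeasurable_actProb_buy1 h.strat0.ae_mem_Icc
        ⟨le_rfl, zero_le_one⟩ (by simpa using 𝒮.Fmix_belief_eq_one hμ)).comp_fst
      fun τ hτ => by rw [← hτ]
  have hF0 := (integral_eq_zero_iff_of_nonneg (fun _ => actProb_nonneg _ _ _)
    (Integrable.of_bound hF 1 (ae_of_all _ fun τ => by
      rw [Real.norm_of_nonneg (actProb_nonneg _ _ _)]; exact actProb_le_one hμ _ _ _))).1 h1
  refine integral_eq_zero_of_ae ?_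
  filter_upwards [hF0] with τ hτ
  simp [show 𝒮.actProb μ σ τ.1 τ.2 .buy1 = 0 from hτ]

lemma one_sub_le_of_G0_pos (h1 : 𝒮.actProbMix μ φ0 φ1 σ .buy1 = 0) {x : ℝ}
    (hx : 0 < 𝒮.G0 x) : 1 - μ ≤ x := by
  by_contra! hlt
  have hxIcc : x ∈ Icc (0:ℝ) 1 :=
    ⟨le_of_not_gt fun hneg => hx.ne' (𝒮.G0_eq_zero_of_nonpos hneg.le), by linarith [hμ.1]⟩
  have hpost : posterior μ x < 1 / 2 := posterior_one_sub hμ ▸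
    posterior_strictMonoOn hμ hxIcc (one_sub_mem_Icc_of_mem_Ioo hμ) hlt
  refine (h.Pi1_pos hμ (ε := 1 / 2 - posterior μ x) (by linarith) fun hnull => ?_).ne'
    (h.Pi1_eq_zero hμ h1)
  refine (ENNReal.toReal_pos_iff.1 hx).1.ne'
    ((𝒮.Fmix_eq_zero_iff hμ).1 (measure_mono_null ?_ hnull))
  refine ofPred_subset_ofPred.2 fun s hs => ?_
  have := (posterior_strictMonoOn hμ).monotoneOn (𝒮.p_mem_Icc s) hxIcc hs.le
  linarith

lemma one_sub_le_alphaLo (h1 : 𝒮.actProbMix μ φ0 φ1 σ .buy1 = 0) : 1 - μ ≤ 𝒮.alphaLo :=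
  le_csInf ⟨2, by simp [G0_eq_one_of_one_lt _ one_lt_two]⟩ fun _ hx =>
    h.one_sub_le_of_G0_pos hμ h1 hx

lemma Pi0_pos {ε : ℝ} (hε : 0 < ε) (hmass : 𝒮.Fmix μ {s | 1 + ε < 2 * 𝒮.belief μ s} ≠ 0) :
    0 < 𝒮.Pi0 μ φ0 φ1 σ := by
  have := h.strat1.1
  obtain ⟨t, hatom, ht⟩ :=
    ((𝒮.countable_belief_atoms μ).dense_compl ℝ).exists_between (lt_min hε one_pos)
  have htIcc : t ∈ Icc (0:ℝ) 1 := ⟨ht.1.le, (ht.2.trans_le (min_le_right _ _)).le⟩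
  have hsale : ∀ τ1 ∈ Icc (0:ℝ) 1,
      (𝒮.Fmix μ {s | 1 + ε < 2 * 𝒮.belief μ s}).toReal ≤ 𝒮.actProb μ σ t τ1 .buy0 := by
    refine fun τ1 hτ1 => le_trans (ENNReal.toReal_mono (measure_ne_top _ _) (measure_mono ?_))
      (h.isConsumerBestReply.toReal_Fmix_le_actProb_buy0 htIcc hτ1)
    refine ofPred_subset_ofPred.2 fun s hs => max_lt ?_ ?_
    all_goals linarith [(𝒮.belief_mem_Icc hμ s).2, hτ1.1, ht.2.trans_le (min_le_left _ _)]
  calc 0 < (𝒮.Fmix μ {s | 1 + ε < 2 * 𝒮.belief μ s}).toReal * t :=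
        mul_pos (ENNReal.toReal_pos hmass (measure_ne_top _ _)) ht.1
    _ ≤ 𝒮.Pi0 μ (Measure.dirac t) φ1 σ := by
      rw [Pi0_dirac]
      refine le_integral_of_ae_le (C := 1)
        ((h.isConsumerBestReply.aestronglyMeasurable_actProb_buy0 h.strat1.ae_mem_Icc htIcc
          (not_ne_iff.1 hatom)).mul_const t) (ae_of_all _ fun τ1 => ?_) ?_
      · rw [norm_mul, Real.norm_of_nonneg (actProb_nonneg _ _ _), Real.norm_of_nonneg htIcc.1]
        exact mul_le_one₀ (actProb_le_one hμ _ _ _) htIcc.1 htIcc.2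
      · filter_upwards [h.strat1.ae_mem_Icc] with τ1 hτ1
        exact mul_le_mul_of_nonneg_right (hsale τ1 hτ1) htIcc.1
    _ ≤ 𝒮.Pi0 μ φ0 φ1 σ := h.firm0opt _ (isPriceStrategy_dirac htIcc)

lemma Pi0_eq_zero (h0 : 𝒮.actProbMix μ φ0 φ1 σ .buy0 = 0) : 𝒮.Pi0 μ φ0 φ1 σ = 0 := by
  have := h.strat0.1; have := h.strat1.1
  by_cases hG : Integrable (fun τ : ℝ × ℝ => 𝒮.actProb μ σ τ.1 τ.2 .buy0 * τ.1) (φ0.prod φ1)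
  swap
  · exact integral_undef hG
  have hF : AEStronglyMeasurable (fun τ : ℝ × ℝ => 𝒮.actProb μ σ τ.1 τ.2 .buy0) (φ0.prod φ1) :=
    .of_mul_of_eq_on_zero measurable_fst hG.aestronglyMeasurable
      (h.isConsumerBestReply.aestronglyMeasurable_actProb_buy0 h.strat1.ae_mem_Icc
        ⟨le_rfl, zero_le_one⟩ (𝒮.Fmix_belief_eq_zero hμ)).comp_snd
      fun τ hτ => by rw [← hτ]
  have hF0 := (integral_eq_zero_iff_of_nonneg (fun _ => actProb_nonneg _ _ _)
    (Integrable.of_bound hF 1 (ae_of_all _ fun τ => by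
      rw [Real.norm_of_nonneg (actProb_nonneg _ _ _)]; exact actProb_le_one hμ _ _ _))).1 h0
  refine integral_eq_zero_of_ae ?_
  filter_upwards [hF0] with τ hτ
  simp [show 𝒮.actProb μ σ τ.1 τ.2 .buy0 = 0 from hτ]

lemma le_one_sub_of_G0_lt_one (h0 : 𝒮.actProbMix μ φ0 φ1 σ .buy0 = 0) {x : ℝ}
    (hx : 𝒮.G0 x < 1) : x ≤ 1 - μ := by
  have := 𝒮.prob0
  by_contra! hlt
  have hxIcc : x ∈ Icc (0:ℝ) 1 :=
    ⟨by linarith [hμ.2], le_of_not_gt fun hgt => hx.ne (𝒮.G0_eq_one_of_one_lt hgt)⟩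
  have hpost : 1 / 2 < posterior μ x := posterior_one_sub hμ ▸
    posterior_strictMonoOn hμ (one_sub_mem_Icc_of_mem_Ioo hμ) hxIcc hlt
  refine (h.Pi0_pos hμ (ε := posterior μ x - 1 / 2) (by linarith) fun hnull => ?_).ne'
    (h.Pi0_eq_zero hμ h0)
  have hcompl : 𝒮.F0 {s | 𝒮.p s < x}ᶜ = 0 := by
    refine (𝒮.Fmix_eq_zero_iff hμ).1 (measure_mono_null ?_ hnull)
    rw [compl_ofPred]
    refine ofPred_subset_ofPred.2 fun s hs => ?_
    have := (posterior_strictMonoOn hμ).monotoneOn hxIcc (𝒮.p_mem_Icc s) (not_lt.1 hs)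
    linarith
  have hmeas : MeasurableSet {s | 𝒮.p s < x} := 𝒮.measurable_p measurableSet_Iio
  rw [prob_compl_eq_zero_iff hmeas] at hcompl
  simp [G0, hcompl] at hx

lemma alphaHi_le_one_sub (h0 : 𝒮.actProbMix μ φ0 φ1 σ .buy0 = 0) : 𝒮.alphaHi ≤ 1 - μ :=
  csSup_le ⟨0, by simp [G0_eq_zero_of_nonpos _ le_rfl]⟩ fun _ hx =>
    h.le_one_sub_of_G0_lt_one hμ h0 hx

end SignalStructure.IsSPE

theorem stmt4_general {S : Type} [MeasurableSpace S] (𝒮 : SignalStructure S)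
    (μ : ℝ) (hμ : μ ∈ Ioo (0:ℝ) 1)
    (φ0 φ1 : Measure ℝ) (σ : CStrategy S)
    (hD : 𝒮.IsDeterrence μ φ0 φ1 σ) :
    (𝒮.actProbMix μ φ0 φ1 σ CAction.buy1 = 0 → (1:ℝ)/2 ≤ posterior μ 𝒮.alphaLo) ∧
      (𝒮.actProbMix μ φ0 φ1 σ CAction.buy0 = 0 → posterior μ 𝒮.alphaHi ≤ (1:ℝ)/2) := by
  have hmono := (posterior_strictMonoOn hμ).monotoneOn
  have hmid := one_sub_mem_Icc_of_mem_Ioo hμ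
  rw [← posterior_one_sub hμ]
  refine ⟨fun h1 => ?_, fun h0 => ?_⟩
  · have hlo := hD.1.one_sub_le_alphaLo hμ h1
    exact hmono hmid ⟨hmid.1.trans hlo, 𝒮.alphaLo_le_one⟩ hlo
  · have hhi := hD.1.alphaHi_le_one_sub hμ h0
    exact hmono ⟨𝒮.alphaHi_nonneg, hhi.trans hmid.2⟩ hmid hhi

/-- In a deterrence equilibrium of Γ(μ): if Firm 0 controls the market
(the consumer never buys from Firm 1) then α⁻_μ ≥ 1/2; symmetrically, if Firm 1
controls the market then α⁺_μ ≤ 1/2.  Here α⁻_μ, α⁺_μ are the posteriors obtained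
from the prior μ and the private beliefs α⁻, α⁺. -/
theorem stmt4 {S : Type} [MeasurableSpace S] (𝒮 : SignalStructure S)
    (g0 g1 : ℝ → ℝ) (hA : 𝒮.Assumption1 g0 g1)
    (μ : ℝ) (hμ : μ ∈ Ioo (0:ℝ) 1)
    (φ0 φ1 : Measure ℝ) (σ : CStrategy S)
    (hD : 𝒮.IsDeterrence μ φ0 φ1 σ) :
    (𝒮.actProbMix μ φ0 φ1 σ CAction.buy1 = 0 → (1:ℝ)/2 ≤ posterior μ 𝒮.alphaLo) ∧
      (𝒮.actProbMix μ φ0 φ1 σ CAction.buy0 = 0 → posterior μ 𝒮.alphaHi ≤ (1:ℝ)/2) :=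
  stmt4_general 𝒮 μ hμ φ0 φ1 σ hD
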